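/- arXiv:math/0212024 — 3 statements merged into one kernel-verified Lean document; each statement's English description precedes it below -/
import Mathlib

section
/- Let V = ⨁_{k ∈ ℤ} V_k be as in the context, with ω a nondegenerate alternating bilinear form on V such that ω(v, w) = 0 whenever v ∈ V_j, w ∈ V_k and j + k ≠ 1. Assume moreover that the grading is definite, i.e. V_k = 0 for all k < 0. Then V_k = 0 for all k ≥ 2 as well, so that V = V_0 ⊕ V_1. -/
/-! For `k ≥ 2` the weight condition lets `V k` pair nontrivially only with `V (1 - k)`, which
vanishes because `1 - k < 0`; so `V k` lies in the kernel of `ω` and is zero by nondegeneracy.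
The only weights left are `0` and `1`, and the direct sum decomposition becomes `V 0 ⊕ V 1`. -/

theorem Submodule.eq_bot_of_pairing_partner_eq_bot {ι R M : Type*} [AddCommGroup ι]
    [CommSemiring R] [AddCommMonoid M] [Module R M] {V : ι → Submodule R M}
    (hV : ⨆ i, V i = ⊤) (ω : M →ₗ[R] M →ₗ[R] R) (hnd : ∀ v, (∀ w, ω v w = 0) → v = 0)
    {c : ι} (hwt : ∀ j k, j + k ≠ c → ∀ v ∈ V j, ∀ w ∈ V k, ω v w = 0)
    {k : ι} (hk : V (c - k) = ⊥) : V k = ⊥ := by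
  refine (Submodule.eq_bot_iff _).mpr fun v hv => hnd v fun w => ?_
  have hωv : ω v = 0 := by
    rw [← LinearMap.ker_eq_top, eq_top_iff, ← hV]
    refine iSup_le fun j => ?_
    by_cases hj : k + j = c
    · rw [eq_sub_of_add_eq' hj, hk]
      exact bot_le
    · exact fun w hw => hwt k j hj v hv w hw
  rw [hωv, LinearMap.zero_apply]

theorem iSupIndep.isCompl_of_eq_bot {ι α : Type*} [CompleteLattice α] {f : ι → α}
    (hf : iSupIndep f) (htop : ⨆ k, f k = ⊤) {i j : ι} (hij : i ≠ j)
    (hbot : ∀ k, k ≠ i → k ≠ j → f k = ⊥) : IsCompl (f i) (f j) := by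
  refine ⟨hf.pairwiseDisjoint hij, codisjoint_iff_le_sup.mpr ?_⟩
  rw [← htop]
  refine iSup_le fun k => ?_
  by_cases hki : k = i
  · exact hki ▸ le_sup_left
  by_cases hkj : k = j
  · exact hkj ▸ le_sup_right
  rw [hbot k hki hkj]
  exact bot_le

theorem definite_grading_concentrated_in_degrees_zero_one_general
    (V : Type*) [AddCommGroup V] [Module ℂ V]
    (Vgr : ℤ → Submodule ℂ V) (hInt : DirectSum.IsInternal Vgr)
    (ω : V →ₗ[ℂ] V →ₗ[ℂ] ℂ)
    (hnd : ∀ v : V, (∀ w : V, ω v w = 0) → v = 0)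
    (hwt : ∀ j k : ℤ, j + k ≠ 1 → ∀ v ∈ Vgr j, ∀ w ∈ Vgr k, ω v w = 0)
    (hdef : ∀ k : ℤ, k < 0 → Vgr k = ⊥) :
    (∀ k : ℤ, 2 ≤ k → Vgr k = ⊥) ∧ IsCompl (Vgr 0) (Vgr 1) := by
  have htop := hInt.submodule_iSup_eq_top
  have hhigh : ∀ k : ℤ, 2 ≤ k → Vgr k = ⊥ := fun k hk =>
    Submodule.eq_bot_of_pairing_partner_eq_bot htop ω hnd hwt (hdef (1 - k) (by omega))
  refine ⟨hhigh, hInt.submodule_iSupIndep.isCompl_of_eq_bot htop zero_ne_one fun k h0 h1 => ?_⟩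
  rcases lt_or_gt_of_ne h0 with hneg | hpos
  · exact hdef k hneg
  · exact hhigh k (by omega)

/-- Let `V = ⨁_{k ∈ ℤ} V_k` be a finite-dimensional complex vector space with an
internal direct sum decomposition, and `ω` a nondegenerate alternating bilinear form on `V`
such that `ω v w = 0` whenever `v ∈ V j`, `w ∈ V k` and `j + k ≠ 1`. Assume the grading is
definite, i.e. `V k = 0` for all `k < 0`. Then `V k = 0` for all `k ≥ 2` as well, so that
`V = V 0 ⊕ V 1`. -/
theorem definite_grading_concentrated_in_degrees_zero_one
    (V : Type*) [AddCommGroup V] [Module ℂ V] [FiniteDimensional ℂ V]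
    (Vgr : ℤ → Submodule ℂ V) (hInt : DirectSum.IsInternal Vgr)
    (ω : V →ₗ[ℂ] V →ₗ[ℂ] ℂ)
    (halt : ∀ v : V, ω v v = 0)
    (hnd : ∀ v : V, (∀ w : V, ω v w = 0) → v = 0)
    (hwt : ∀ j k : ℤ, j + k ≠ 1 → ∀ v ∈ Vgr j, ∀ w ∈ Vgr k, ω v w = 0)
    (hdef : ∀ k : ℤ, k < 0 → Vgr k = ⊥) :
    (∀ k : ℤ, 2 ≤ k → Vgr k = ⊥) ∧ IsCompl (Vgr 0) (Vgr 1) :=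
  definite_grading_concentrated_in_degrees_zero_one_general V Vgr hInt ω hnd hwt hdef
end

section
/- Let V = ⨁_{k ∈ ℤ} V_k be as in the context, with ω a nondegenerate alternating bilinear form on V such that ω(v, w) = 0 whenever v ∈ V_j, w ∈ V_k and j + k ≠ 1, and assume V_k = 0 for all k < 0. Then the subspaces V_0 and V_1 are both Lagrangian: ω vanishes identically on V_0 × V_0 and on V_1 × V_1, and dim V_0 = dim V_1 = (dim V)/2. In particular dim V is even. -/
/-!
Nondegeneracy forces every weight `k ≥ 2` to vanish: a vector of weight `k` pairs only with
weight `1 - k < 0`, which is zero. So `V = V₀ ⊕ V₁`, both summands are isotropic since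
`0 + 0 ≠ 1 ≠ 1 + 1`, and nondegeneracy makes `ω` a perfect pairing `V₀ × V₁ → ℂ`,
whence `dim V₀ = dim V₁`.
-/

open Module

theorem DirectSum.IsInternal.isCompl_of_eq_bot {R M ι : Type*} [Ring R] [AddCommGroup M]
    [Module R M] [DecidableEq ι] {A : ι → Submodule R M} (hA : DirectSum.IsInternal A)
    {i j : ι} (hij : i ≠ j) (hbot : ∀ k, k ≠ i → k ≠ j → A k = ⊥) : IsCompl (A i) (A j) := by
  refine ⟨hA.submodule_iSupIndep.pairwiseDisjoint hij, codisjoint_iff.mpr <| top_unique ?_⟩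
  rw [← hA.submodule_iSup_eq_top]
  refine iSup_le fun k => ?_
  by_cases hki : k = i
  · exact hki ▸ le_sup_left
  by_cases hkj : k = j
  · exact hkj ▸ le_sup_right
  simp [hbot k hki hkj]

section Pairing

variable {K V : Type*} [Field K] [AddCommGroup V] [Module K V] (ω : V →ₗ[K] V →ₗ[K] K)

theorem LinearMap.eq_zero_of_isCompl_of_isotropic
    (hnd : ∀ v : V, (∀ w : V, ω v w = 0) → v = 0) {W₀ W₁ : Submodule K V} (hc : IsCompl W₀ W₁)
    (hiso : ∀ v ∈ W₀, ∀ w ∈ W₀, ω v w = 0) {v : V} (hv : v ∈ W₀)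
    (hv₁ : ∀ w ∈ W₁, ω v w = 0) : v = 0 := by
  refine hnd v fun w => ?_
  have hker : W₀ ⊔ W₁ ≤ LinearMap.ker (ω v) := sup_le (hiso v hv) hv₁
  exact hker (hc.codisjoint.eq_top ▸ Submodule.mem_top)

theorem LinearMap.finrank_le_of_isCompl_of_isotropic [FiniteDimensional K V]
    (hnd : ∀ v : V, (∀ w : V, ω v w = 0) → v = 0) {W₀ W₁ : Submodule K V} (hc : IsCompl W₀ W₁)
    (hiso : ∀ v ∈ W₀, ∀ w ∈ W₀, ω v w = 0) : finrank K W₀ ≤ finrank K W₁ := by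
  have hinj : Function.Injective (ω.domRestrict₁₂ W₀ W₁) := by
    refine (injective_iff_map_eq_zero _).mpr fun v hv => Subtype.ext ?_
    exact ω.eq_zero_of_isCompl_of_isotropic hnd hc hiso v.2 fun w hw =>
      LinearMap.congr_fun hv ⟨w, hw⟩
  simpa using LinearMap.finrank_le_finrank_of_injective hinj

end Pairing

theorem weight_eq_bot_of_one_lt {K V : Type*} [Field K] [AddCommGroup V] [Module K V]
    {Vgr : ℤ → Submodule K V} (hInt : DirectSum.IsInternal Vgr) (ω : V →ₗ[K] V →ₗ[K] K)
    (hnd : ∀ v : V, (∀ w : V, ω v w = 0) → v = 0)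
    (hwt : ∀ j k : ℤ, j + k ≠ 1 → ∀ v ∈ Vgr j, ∀ w ∈ Vgr k, ω v w = 0)
    (hdef : ∀ k : ℤ, k < 0 → Vgr k = ⊥) {k : ℤ} (hk : 1 < k) : Vgr k = ⊥ := by
  refine (Submodule.eq_bot_iff _).mpr fun v hv => hnd v fun w => ?_
  have hker : iSup Vgr ≤ LinearMap.ker (ω v) := iSup_le fun j => by
    rcases lt_or_ge j 0 with hj | hj
    · simp [hdef j hj]
    · exact hwt k j (by omega) v hv
  exact hker (hInt.submodule_iSup_eq_top ▸ Submodule.mem_top)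

theorem weight_zero_and_one_subspaces_lagrangian_general
    (V : Type*) [AddCommGroup V] [Module ℂ V] [FiniteDimensional ℂ V]
    (Vgr : ℤ → Submodule ℂ V) (hInt : DirectSum.IsInternal Vgr)
    (ω : V →ₗ[ℂ] V →ₗ[ℂ] ℂ)
    (hnd : ∀ v : V, (∀ w : V, ω v w = 0) → v = 0)
    (hwt : ∀ j k : ℤ, j + k ≠ 1 → ∀ v ∈ Vgr j, ∀ w ∈ Vgr k, ω v w = 0)
    (hdef : ∀ k : ℤ, k < 0 → Vgr k = ⊥) :
    (∀ v ∈ Vgr 0, ∀ w ∈ Vgr 0, ω v w = 0) ∧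
    (∀ v ∈ Vgr 1, ∀ w ∈ Vgr 1, ω v w = 0) ∧
    Module.finrank ℂ (Vgr 0) = Module.finrank ℂ (Vgr 1) ∧
    2 * Module.finrank ℂ (Vgr 0) = Module.finrank ℂ V ∧
    Even (Module.finrank ℂ V) := by
  have hc : IsCompl (Vgr 0) (Vgr 1) := hInt.isCompl_of_eq_bot zero_ne_one fun k h0 h1 =>
    (lt_or_gt_of_ne h0).elim (hdef k) fun hk =>
      weight_eq_bot_of_one_lt hInt ω hnd hwt hdef (by omega)
  have hiso₀ : ∀ v ∈ Vgr 0, ∀ w ∈ Vgr 0, ω v w = 0 := hwt 0 0 (by norm_num)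
  have hiso₁ : ∀ v ∈ Vgr 1, ∀ w ∈ Vgr 1, ω v w = 0 := hwt 1 1 (by norm_num)
  have hrank : finrank ℂ (Vgr 0) = finrank ℂ (Vgr 1) :=
    le_antisymm (ω.finrank_le_of_isCompl_of_isotropic hnd hc hiso₀)
      (ω.finrank_le_of_isCompl_of_isotropic hnd hc.symm hiso₁)
  have hdim := Submodule.finrank_add_eq_of_isCompl hc
  exact ⟨hiso₀, hiso₁, hrank, by omega, ⟨finrank ℂ (Vgr 0), by omega⟩⟩

/-- Let `V = ⨁_{k ∈ ℤ} V_k` be a finite-dimensional complex vector space with an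
internal direct sum decomposition, and `ω` a nondegenerate alternating bilinear form on `V`
such that `ω v w = 0` whenever `v ∈ V j`, `w ∈ V k` and `j + k ≠ 1`. Assume `V k = 0` for all
`k < 0`. Then `V 0` and `V 1` are both Lagrangian: `ω` vanishes identically on `V 0 × V 0`
and on `V 1 × V 1`, and `dim V 0 = dim V 1 = (dim V)/2`. In particular `dim V` is even. -/
theorem weight_zero_and_one_subspaces_lagrangian
    (V : Type*) [AddCommGroup V] [Module ℂ V] [FiniteDimensional ℂ V]
    (Vgr : ℤ → Submodule ℂ V) (hInt : DirectSum.IsInternal Vgr)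
    (ω : V →ₗ[ℂ] V →ₗ[ℂ] ℂ)
    (halt : ∀ v : V, ω v v = 0)
    (hnd : ∀ v : V, (∀ w : V, ω v w = 0) → v = 0)
    (hwt : ∀ j k : ℤ, j + k ≠ 1 → ∀ v ∈ Vgr j, ∀ w ∈ Vgr k, ω v w = 0)
    (hdef : ∀ k : ℤ, k < 0 → Vgr k = ⊥) :
    (∀ v ∈ Vgr 0, ∀ w ∈ Vgr 0, ω v w = 0) ∧
    (∀ v ∈ Vgr 1, ∀ w ∈ Vgr 1, ω v w = 0) ∧
    Module.finrank ℂ (Vgr 0) = Module.finrank ℂ (Vgr 1) ∧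
    2 * Module.finrank ℂ (Vgr 0) = Module.finrank ℂ V ∧
    Even (Module.finrank ℂ V) :=
  weight_zero_and_one_subspaces_lagrangian_general V Vgr hInt ω hnd hwt hdef
end

section
/- Every matrix A ∈ sp(2n, ℂ) with rank A ≤ 1 is of the form A = μ(v) = v vᵀ J for some vector v ∈ ℂ^{2n}. Hence the image of μ is exactly {A ∈ sp(2n, ℂ) : rank A ≤ 1}. -/
open Matrix

/-- The map `μ : ℂ^{2n} → Mat_{2n}(ℂ)`, `μ(v) = v vᵀ J`, the matrix product of the column
vector `v`, the row vector `vᵀ`, and the standard symplectic matrix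
`J = [[0, Iₙ], [-Iₙ, 0]]` (here `Matrix.J (Fin n) ℂ`). -/
noncomputable def muMap (n : ℕ) (v : Fin n ⊕ Fin n → ℂ) :
    Matrix (Fin n ⊕ Fin n) (Fin n ⊕ Fin n) ℂ :=
  Matrix.replicateCol Unit v * Matrix.replicateRow Unit v * Matrix.J (Fin n) ℂ

/-- A matrix of rank at most one is an outer product. -/
lemma outer_of_rank_le_one {m : Type*} [Fintype m] [DecidableEq m]
    (A : Matrix m m ℂ) (h : A.rank ≤ 1) :
    ∃ u w : m → ℂ, ∀ i j, A i j = u i * w j := by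
  have h' : Module.finrank ℂ (LinearMap.range A.mulVecLin) ≤ 1 := h
  rw [Submodule.finrank_le_one_iff_isPrincipal] at h'
  obtain ⟨u, hu⟩ := h'
  have hcol : ∀ j, ∃ c : ℂ, ∀ i, A i j = c * u i := by
    intro j
    have hmem : (fun i => A i j) ∈ LinearMap.range A.mulVecLin := by
      refine ⟨Pi.single j 1, ?_⟩
      ext i
      simp [Matrix.mulVecLin, Matrix.mulVec, dotProduct, Pi.single_apply]
    rw [hu, Submodule.mem_span_singleton] at hmem
    obtain ⟨c, hc⟩ := hmem
    exact ⟨c, fun i => by simpa using (congrFun hc i).symm⟩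
  choose w hw using hcol
  exact ⟨u, w, fun i j => by rw [hw j i]; ring⟩

/-- `μ(v)` lies in the rank-≤1 part of the symplectic Lie algebra. -/
lemma muMap_mem (n : ℕ) (v : Fin n ⊕ Fin n → ℂ) :
    (muMap n v)ᵀ * Matrix.J (Fin n) ℂ + Matrix.J (Fin n) ℂ * muMap n v = 0 ∧
      (muMap n v).rank ≤ 1 := by
  constructor
  · have ht : (muMap n v)ᵀ =
        -(Matrix.J (Fin n) ℂ * (Matrix.replicateCol Unit v * Matrix.replicateRow Unit v)) := by
      simp [muMap, Matrix.transpose_mul, Matrix.J_transpose, Matrix.transpose_replicateCol,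
        Matrix.transpose_replicateRow, Matrix.mul_assoc]
    rw [ht, muMap]
    simp [Matrix.mul_assoc]
  · calc (muMap n v).rank ≤ (Matrix.replicateCol Unit v * Matrix.replicateRow Unit v).rank :=
          Matrix.rank_mul_le_left _ _
      _ ≤ (Matrix.replicateCol Unit v : Matrix _ Unit ℂ).rank := Matrix.rank_mul_le_left _ _
      _ ≤ Fintype.card Unit := Matrix.rank_le_card_width _
      _ = 1 := by simp

lemma muMap_apply (n : ℕ) (v : Fin n ⊕ Fin n → ℂ) (i j : Fin n ⊕ Fin n) :
    muMap n v i j = v i * ∑ k, v k * Matrix.J (Fin n) ℂ k j := by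
  simp [muMap, Matrix.mul_apply, Finset.mul_sum, mul_add, mul_assoc]

/-- Every matrix `A ∈ sp(2n, ℂ)` with `rank A ≤ 1` is of the form
`A = μ(v) = v vᵀ J` for some `v ∈ ℂ^{2n}`. Hence the image of `μ` is exactly
`{A ∈ sp(2n, ℂ) : rank A ≤ 1}`. -/
theorem muMap_surjects_onto_rank_le_one_symplectic (n : ℕ) (hn : 1 ≤ n) :
    (∀ A : Matrix (Fin n ⊕ Fin n) (Fin n ⊕ Fin n) ℂ,
      Aᵀ * Matrix.J (Fin n) ℂ + Matrix.J (Fin n) ℂ * A = 0 → A.rank ≤ 1 →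
        ∃ v : Fin n ⊕ Fin n → ℂ, A = muMap n v) ∧
    Set.range (muMap n) =
      {A : Matrix (Fin n ⊕ Fin n) (Fin n ⊕ Fin n) ℂ |
        Aᵀ * Matrix.J (Fin n) ℂ + Matrix.J (Fin n) ℂ * A = 0 ∧ A.rank ≤ 1} := by
  set Jm := Matrix.J (Fin n) ℂ with hJ
  have main : ∀ A : Matrix (Fin n ⊕ Fin n) (Fin n ⊕ Fin n) ℂ,
      Aᵀ * Jm + Jm * A = 0 → A.rank ≤ 1 →
        ∃ v : Fin n ⊕ Fin n → ℂ, A = muMap n v := by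
    intro A h1 h2
    obtain ⟨u, w, huw⟩ := outer_of_rank_le_one A h2
    by_cases hA : A = 0
    · refine ⟨0, ?_⟩
      rw [hA]
      ext i j
      simp [muMap_apply]
    · -- u and w are nonzero
      have hune : u ≠ 0 := by
        rintro rfl
        exact hA (by ext i j; simp [huw i j])
      -- a = J *ᵥ u
      set a : Fin n ⊕ Fin n → ℂ := Jm *ᵥ u with ha
      have haa : ∀ i, a i = ∑ k, Jm i k * u k := by
        intro i; simp [ha, Matrix.mulVec, dotProduct]
      have hJanti : ∀ k j, Jm k j = -(Jm j k) := by
        intro k j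
        have h := congrFun (congrFun (Matrix.J_transpose (Fin n) ℂ) j) k
        simpa using h
      -- the symplectic relation entrywise
      have key : ∀ i j, a i * w j = w i * a j := by
        intro i j
        have h := congrFun (congrFun h1 i) j
        simp only [Matrix.add_apply, Matrix.mul_apply, Matrix.transpose_apply,
          Matrix.zero_apply] at h
        have e1 : ∑ k, A k i * Jm k j = w i * (-(a j)) := by
          have step : ∀ k, A k i * Jm k j = -(w i * (Jm j k * u k)) := fun k => by
            rw [huw k i, hJanti k j]; ring
          rw [Finset.sum_congr rfl (fun k _ => step k), Finset.sum_neg_distrib,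
            ← Finset.mul_sum, haa]
          ring
        have e2 : ∑ k, Jm i k * A k j = a i * w j := by
          rw [haa, Finset.sum_mul]
          refine Finset.sum_congr rfl fun k _ => ?_
          rw [huw k j]; ring
        rw [e1, e2] at h
        linear_combination h
      -- a ≠ 0
      have hane : a ≠ 0 := by
        intro h0
        apply hune
        have : Jm *ᵥ (Jm *ᵥ u) = Jm *ᵥ a := rfl
        rw [h0, Matrix.mulVec_mulVec, hJ, Matrix.J_squared, Matrix.neg_mulVec,
          Matrix.one_mulVec, Matrix.mulVec_zero] at this
        simpa [neg_eq_zero] using this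
      obtain ⟨i0, hi0⟩ : ∃ i0, a i0 ≠ 0 := by
        by_contra hc
        push_neg at hc
        exact hane (funext hc)
      set c : ℂ := w i0 / a i0 with hc
      have hwc : ∀ j, w j = c * a j := by
        intro j
        have := key i0 j
        rw [hc, div_mul_eq_mul_div, eq_div_iff hi0]
        linear_combination this
      obtain ⟨s, hs⟩ := IsAlgClosed.exists_pow_nat_eq (-c) (n := 2) (by norm_num)
      refine ⟨s • u, ?_⟩
      ext i j
      rw [muMap_apply]
      have hsum : ∑ k, (s • u) k * Jm k j = -(s * a j) := by
        have step : ∀ k, (s • u) k * Jm k j = -(s * (Jm j k * u k)) := fun k => by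
          rw [hJanti k j]; simp only [Pi.smul_apply, smul_eq_mul]; ring
        rw [Finset.sum_congr rfl (fun k _ => step k), Finset.sum_neg_distrib,
          ← Finset.mul_sum, haa]
      rw [hsum, huw i j, hwc j]
      have : s * s = -c := by rw [← hs]; ring
      simp only [Pi.smul_apply, smul_eq_mul]
      linear_combination (u i * a j) * this
  refine ⟨main, ?_⟩
  ext A
  simp only [Set.mem_range, Set.mem_setOf_eq]
  constructor
  · rintro ⟨v, rfl⟩
    exact muMap_mem n v
  · rintro ⟨h1, h2⟩
    obtain ⟨v, hv⟩ := main A h1 h2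
    exact ⟨v, hv.symm⟩
end
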